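/- arXiv:2603.23930 — 3 statements merged into one kernel-verified Lean document; each statement's English description precedes it below -/
import Mathlib

section
/- With u and v defined as above, one has u^{q−1} = λ·(v^q − v). -/
/-! The Frobenius fixes `λ`, so `λ (v^q - v) = (y/w)^q - y/w = (y^q - w^(q-1) y) / w^q`,
and the relation `x = -w^(q-1)` turns the numerator into `w`, leaving `w^(1-q) = u^(q-1)`. -/

theorem Subfield.pow_natCard_of_mem {E : Type*} [Field E] (K : Subfield E) [Finite K]
    {a : E} (ha : a ∈ K) : a ^ Nat.card K = a := by
  have := Fintype.ofFinite K
  simpa [Nat.card_eq_fintype_card] using congrArg Subtype.val (FiniteField.pow_card (⟨a, ha⟩ : K))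

theorem mul_div_pow_sub_div_of_pow_eq_self {E : Type*} [Field E] {c : E} {q : ℕ}
    (hc : c ^ q = c) (hc0 : c ≠ 0) (a : E) :
    c * ((a / c) ^ q - a / c) = a ^ q - a := by
  rw [div_pow, hc]
  field_simp

theorem div_pow_sub_div_eq_of_pow_sub_one_add_eq_zero {E : Type*} [Field E] {q : ℕ} {w x : E}
    (hq : q ≠ 0) (hw0 : w ≠ 0) (hrel : w ^ (q - 1) + x = 0) (y : E) :
    (y / w) ^ q - y / w = (y ^ q + x * y) / w ^ q := by
  rw [eq_neg_of_add_eq_zero_right hrel, div_pow]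
  field_simp
  rw [← pow_sub_one_mul hq w]
  ring

theorem self_div_pow_eq_inv_pow_sub_one {E : Type*} [Field E] {q : ℕ} (hq : q ≠ 0) {w : E}
    (hw0 : w ≠ 0) : w / w ^ q = w⁻¹ ^ (q - 1) := by
  rw [inv_pow, ← pow_sub_one_mul hq, div_mul_cancel_right₀ hw0]

/-- Let `q` be a prime power, `E` a field containing a subfield `Fq` with `q` elements,
`λ ∈ Fq` nonzero, and `x, y ∈ E` with `w = y^q + x*y` nonzero and `w^(q-1) + x = 0`.
With `u = w⁻¹` and `v = y * (λ*w)⁻¹`, one has `u^(q-1) = λ * (v^q - v)`. -/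
theorem cyclotomic_stmt3
    (q : ℕ) (hq : IsPrimePow q)
    (E : Type*) [Field E] (Fq : Subfield E) (hFq : Nat.card Fq = q)
    (lam x y w u v : E)
    (hlam : lam ∈ Fq) (hlam0 : lam ≠ 0)
    (hw : w = y ^ q + x * y) (hw0 : w ≠ 0)
    (hrel : w ^ (q - 1) + x = 0)
    (hu : u = w⁻¹) (hv : v = y * (lam * w)⁻¹) :
    u ^ (q - 1) = lam * (v ^ q - v) := by
  have hq0 : q ≠ 0 := hq.ne_zero
  have : Finite Fq := Nat.finite_of_card_ne_zero (hFq ▸ hq0)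
  have hlam_frob : lam ^ q = lam := hFq ▸ Fq.pow_natCard_of_mem hlam
  have hv' : v = y / w / lam := by rw [hv, div_div, mul_comm w, div_eq_mul_inv]
  rw [hv', mul_div_pow_sub_div_of_pow_eq_self hlam_frob hlam0,
    div_pow_sub_div_eq_of_pow_sub_one_add_eq_zero hq0 hw0 hrel, ← hw, hu,
    self_div_pow_eq_inv_pow_sub_one hq0 hw0]
end

section
/- With u and v defined as above, the subfield of E generated by 𝔽_q ∪ {x, y} is equal to the subfield of E generated by 𝔽_q ∪ {u, v}. (In particular, the cyclotomic function field L(Λ_{x²}) = 𝔽_q(x, y) is 𝔽_q-isomorphic to the function field 𝔽_q(u, v) defined by u^{q−1} = λ·(v^q − v).) -/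
/-!
The field `𝔽_q(x, y)` contains `w = y ^ q + x * y`, hence `u = w⁻¹` and `v = y * (λ * w)⁻¹`.
Conversely `w = u⁻¹` lies in `𝔽_q(u, v)`, and then so do `x = -w ^ (q - 1)` (the defining
relation) and `y = λ * v * w`.
-/

namespace Subfield

variable {E : Type*} [Field E] {S : Set E} {a b c d : E}

theorem mem_closure_union_pair_left : a ∈ closure (S ∪ {a, b}) :=
  subset_closure (by simp)

theorem mem_closure_union_pair_right : b ∈ closure (S ∪ {a, b}) :=
  subset_closure (by simp)

theorem closure_union_pair_le {K : Subfield E} (hS : S ⊆ K) (ha : a ∈ K) (hb : b ∈ K) :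
    closure (S ∪ {a, b}) ≤ K :=
  closure_le.2 (Set.union_subset hS (Set.insert_subset ha (Set.singleton_subset_iff.2 hb)))

theorem closure_union_pair_eq
    (hc : c ∈ closure (S ∪ {a, b})) (hd : d ∈ closure (S ∪ {a, b}))
    (ha : a ∈ closure (S ∪ {c, d})) (hb : b ∈ closure (S ∪ {c, d})) :
    closure (S ∪ {a, b}) = closure (S ∪ {c, d}) :=
  le_antisymm (closure_union_pair_le (Set.subset_union_left.trans subset_closure) ha hb)
    (closure_union_pair_le (Set.subset_union_left.trans subset_closure) hc hd)

end Subfield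

theorem cyclotomic_stmt4_general
    (q : ℕ)
    (E : Type*) [Field E] (Fq : Subfield E)
    (lam x y w u v : E)
    (hlam : lam ∈ Fq) (hlam0 : lam ≠ 0)
    (hw : w = y ^ q + x * y) (hw0 : w ≠ 0)
    (hrel : w ^ (q - 1) + x = 0)
    (hu : u = w⁻¹) (hv : v = y * (lam * w)⁻¹) :
    Subfield.closure ((Fq : Set E) ∪ {x, y}) =
      Subfield.closure ((Fq : Set E) ∪ {u, v}) := by
  set K := Subfield.closure ((Fq : Set E) ∪ {x, y})
  set L := Subfield.closure ((Fq : Set E) ∪ {u, v})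
  have hlamK : lam ∈ K := Subfield.subset_closure (Or.inl hlam)
  have hlamL : lam ∈ L := Subfield.subset_closure (Or.inl hlam)
  have hwK : w ∈ K := hw ▸ K.add_mem (K.pow_mem Subfield.mem_closure_union_pair_right q)
    (K.mul_mem Subfield.mem_closure_union_pair_left Subfield.mem_closure_union_pair_right)
  have hwL : w ∈ L := by
    simpa [hu] using L.inv_mem (Subfield.mem_closure_union_pair_left : u ∈ L)
  have hx : x = -w ^ (q - 1) := by linear_combination hrel
  have hy : y = v * (lam * w) := by rw [hv]; field_simp
  refine Subfield.closure_union_pair_eq ?_ ?_ ?_ ?_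
  · exact hu ▸ K.inv_mem hwK
  · exact hv ▸ K.mul_mem Subfield.mem_closure_union_pair_right (K.inv_mem (K.mul_mem hlamK hwK))
  · exact hx ▸ L.neg_mem (L.pow_mem hwL _)
  · exact hy ▸ L.mul_mem Subfield.mem_closure_union_pair_right (L.mul_mem hlamL hwL)

/-- Let `q` be a prime power, `E` a field containing a subfield `Fq` with `q` elements,
`λ ∈ Fq` nonzero, and `x, y ∈ E` with `w = y^q + x*y` nonzero and `w^(q-1) + x = 0`.
With `u = w⁻¹` and `v = y * (λ*w)⁻¹`, the subfield of `E` generated by `Fq ∪ {x, y}`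
equals the subfield generated by `Fq ∪ {u, v}`. -/
theorem cyclotomic_stmt4
    (q : ℕ) (hq : IsPrimePow q)
    (E : Type*) [Field E] (Fq : Subfield E) (hFq : Nat.card Fq = q)
    (lam x y w u v : E)
    (hlam : lam ∈ Fq) (hlam0 : lam ≠ 0)
    (hw : w = y ^ q + x * y) (hw0 : w ≠ 0)
    (hrel : w ^ (q - 1) + x = 0)
    (hu : u = w⁻¹) (hv : v = y * (lam * w)⁻¹) :
    Subfield.closure ((Fq : Set E) ∪ {x, y}) =
      Subfield.closure ((Fq : Set E) ∪ {u, v}) :=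
  cyclotomic_stmt4_general q E Fq lam x y w u v hlam hlam0 hw hw0 hrel hu hv
end

section
/- There exist an element u ∈ E and a nonzero μ ∈ 𝔽_q such that u^{q−1} = μ·(v^q − v) and the subfield of E generated by 𝔽_q ∪ {v, y} equals the subfield of E generated by 𝔽_q ∪ {v, u}. (This is the reduction step in the proof of the main theorem: any Kummer extension y^{q−1} = λ(v^q − v)^n with gcd(n, q−1) = 1 is the same field as one given by u^{q−1} = μ(v^q − v).) -/
/-!
Write `d = q - 1` and `w = v ^ q - v`, and use `gcd(n, d) = 1` to choose integers with `a * n + b * d = 1`.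
Then `u = y ^ a * w ^ b` satisfies `u ^ d = λ ^ a * w` and `y = u ^ n * λ ^ b`, so each of
`y` and `u` lies in the field generated by `𝔽_q`, `v` and the other one.
-/

section Bezout

variable {K : Type*} [Field K] {d n : ℕ} {a b : ℤ} {lam w y : K}

theorem zpow_bezout_pow_eq (hab : a * n + b * d = 1) (hrel : y ^ d = lam * w ^ n) :
    (y ^ a * w ^ b) ^ d = lam ^ a * w := by
  calc (y ^ a * w ^ b) ^ d = (lam * w ^ n) ^ a * w ^ (b * d) := by
        rw [← hrel]; simp only [mul_zpow, ← zpow_natCast, ← zpow_mul]; ring_nf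
    _ = lam ^ a * w ^ (a * n + b * d) := by
        rw [zpow_add' (by simp [hab])]; simp only [mul_zpow, ← zpow_natCast, ← zpow_mul]; ring_nf
    _ = lam ^ a * w := by rw [hab, zpow_one]

theorem zpow_bezout_pow_mul_eq (hab : a * n + b * d = 1) (hy : y ≠ 0)
    (hrel : y ^ d = lam * w ^ n) :
    (y ^ a * w ^ b) ^ n * lam ^ b = y := by
  calc (y ^ a * w ^ b) ^ n * lam ^ b = y ^ (a * n) * (lam * w ^ n) ^ b := by
        simp only [mul_zpow, ← zpow_natCast, ← zpow_mul]; ring_nf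
    _ = y ^ (a * n + b * d) := by
        rw [← hrel, zpow_add₀ hy, ← zpow_natCast, ← zpow_mul, mul_comm (d : ℤ)]
    _ = y := by rw [hab, zpow_one]

end Bezout

theorem Subfield.closure_union_pair_le_s7 {K : Type*} [Field K] {S : Set K} {v y u : K}
    (hy : y ∈ closure (S ∪ {v, u})) :
    closure (S ∪ {v, y}) ≤ closure (S ∪ {v, u}) :=
  closure_le.mpr <| Set.union_subset (fun _ hx ↦ subset_closure (Or.inl hx)) <|
    Set.insert_subset_iff.mpr ⟨subset_closure (Or.inr (Or.inl rfl)),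
      Set.singleton_subset_iff.mpr hy⟩

theorem cyclotomic_stmt7_general
    (q : ℕ)
    (E : Type*) [Field E] (Fq : Subfield E)
    (lam : E) (hlam : lam ∈ Fq) (hlam0 : lam ≠ 0)
    (n : ℕ) (hcop : Nat.gcd n (q - 1) = 1)
    (v y : E) (hy0 : y ≠ 0)
    (hrel : y ^ (q - 1) = lam * (v ^ q - v) ^ n) :
    ∃ u μ : E, μ ∈ Fq ∧ μ ≠ 0 ∧ u ^ (q - 1) = μ * (v ^ q - v) ∧
      Subfield.closure ((Fq : Set E) ∪ {v, y}) =
        Subfield.closure ((Fq : Set E) ∪ {v, u}) := by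
  set a := Nat.gcdA n (q - 1)
  set b := Nat.gcdB n (q - 1)
  have hab : a * n + b * (q - 1 : ℕ) = 1 := by
    rw [mul_comm a, mul_comm b, ← Nat.gcd_eq_gcd_ab, hcop, Nat.cast_one]
  have hv (x : E) : v ∈ Subfield.closure ((Fq : Set E) ∪ {v, x}) :=
    Subfield.subset_closure (Or.inr (Or.inl rfl))
  have hself (x : E) : x ∈ Subfield.closure ((Fq : Set E) ∪ {v, x}) :=
    Subfield.subset_closure (Or.inr (Or.inr rfl))
  have hlam_mem (x : E) : lam ∈ Subfield.closure ((Fq : Set E) ∪ {v, x}) :=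
    Subfield.subset_closure (Or.inl hlam)
  set u := y ^ a * (v ^ q - v) ^ b
  refine ⟨u, lam ^ a, zpow_mem hlam a, zpow_ne_zero a hlam0,
    zpow_bezout_pow_eq hab hrel, le_antisymm ?_ ?_⟩
  · refine Subfield.closure_union_pair_le_s7 ?_
    rw [← zpow_bezout_pow_mul_eq hab hy0 hrel]
    exact mul_mem (pow_mem (hself u) n) (zpow_mem (hlam_mem u) b)
  · exact Subfield.closure_union_pair_le_s7
      (mul_mem (zpow_mem (hself y) a) (zpow_mem (sub_mem (pow_mem (hv y) q) (hv y)) b))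

/-- Let `q` be a prime power, `E` a field containing a subfield `Fq` with `q` elements,
`λ ∈ Fq` nonzero, `n` a positive integer coprime to `q - 1`, and `v, y ∈ E` with `y ≠ 0`
and `y^(q-1) = λ * (v^q - v)^n`.  Then there exist `u ∈ E` and a nonzero `μ ∈ Fq` with
`u^(q-1) = μ * (v^q - v)` and the subfield of `E` generated by `Fq ∪ {v, y}` equals the
subfield generated by `Fq ∪ {v, u}`. -/
theorem cyclotomic_stmt7
    (q : ℕ) (hq : IsPrimePow q)
    (E : Type*) [Field E] (Fq : Subfield E) (hFq : Nat.card Fq = q)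
    (lam : E) (hlam : lam ∈ Fq) (hlam0 : lam ≠ 0)
    (n : ℕ) (hn : 0 < n) (hcop : Nat.gcd n (q - 1) = 1)
    (v y : E) (hy0 : y ≠ 0)
    (hrel : y ^ (q - 1) = lam * (v ^ q - v) ^ n) :
    ∃ u μ : E, μ ∈ Fq ∧ μ ≠ 0 ∧ u ^ (q - 1) = μ * (v ^ q - v) ∧
      Subfield.closure ((Fq : Set E) ∪ {v, y}) =
        Subfield.closure ((Fq : Set E) ∪ {v, u}) :=
  cyclotomic_stmt7_general q E Fq lam hlam hlam0 n hcop v y hy0 hrel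
end
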